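/- Let X and Y be Hausdorff spaces, τ : X → X a fixed-point free continuous involution, and suppose Emb(Y) < ∞. If secat(q : X → X/τ) > Emb(Y), then the triple ((X,τ);Y) satisfies the Borsuk–Ulam property. -/

import Mathlib

open Metric Set

/-- A continuous local section of `p` over `U`. -/
def IsLocalSection {E B : Type*} [TopologicalSpace E] [TopologicalSpace B]
    (p : E → B) (U : Set B) : Prop :=
  ∃ s : U → E, Continuous s ∧ ∀ x : U, p (s x) = (x : B)

/-- The sectional category of a map `p : E → B`: the least number of open sets covering `B`,
over each of which `p` admits a continuous local section; `⊤` if no finite cover exists. -/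
noncomputable def secat {E B : Type*} [TopologicalSpace E] [TopologicalSpace B]
    (p : E → B) : ℕ∞ :=
  sInf {n : ℕ∞ | ∃ k : ℕ, n = (k : ℕ∞) ∧ ∃ U : Fin k → Set B,
    (∀ i, IsOpen (U i)) ∧ (⋃ i, U i) = Set.univ ∧ ∀ i, IsLocalSection p (U i)}

/-- A subset is contractible within the ambient space if its inclusion is nullhomotopic. -/
def ContractibleIn {X : Type*} [TopologicalSpace X] (U : Set X) : Prop :=
  ContinuousMap.Nullhomotopic (⟨(Subtype.val : U → X), continuous_subtype_val⟩ : C(U, X))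

/-- Lusternik–Schnirelmann category: least number of open sets covering `X`, each
contractible within `X`. -/
noncomputable def LScat (X : Type*) [TopologicalSpace X] : ℕ∞ :=
  sInf {n : ℕ∞ | ∃ k : ℕ, n = (k : ℕ∞) ∧ ∃ U : Fin k → Set X,
    (∀ i, IsOpen (U i)) ∧ (⋃ i, U i) = Set.univ ∧ ∀ i, ContractibleIn (U i)}

/-- Hurewicz fibration: the homotopy lifting property with respect to all spaces. -/
def IsHurewiczFibration {E B : Type*} [TopologicalSpace E] [TopologicalSpace B]
    (p : E → B) : Prop :=
  ∀ (Z : Type*) [TopologicalSpace Z] (H : Z × unitInterval → B) (h : Z → E),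
    Continuous H → Continuous h → (∀ z, p (h z) = H (z, 0)) →
    ∃ G : Z × unitInterval → E, Continuous G ∧ (∀ z, G (z, 0) = h z) ∧ ∀ w, p (G w) = H w

/-- The orbit relation of the action generated by a map `τ`. -/
def orbitRelOf {X : Type*} (τ : X → X) : X → X → Prop := fun x y => y = τ x

/-- Quotient of `X` by the (involutive) map `τ`, with the quotient topology. -/
abbrev InvolQuot {X : Type*} [TopologicalSpace X] (τ : X → X) : Type _ := Quot (orbitRelOf τ)

/-- The quotient map `X → X/τ`. -/
def involQuotMk {X : Type*} [TopologicalSpace X] (τ : X → X) : X → InvolQuot τ :=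
  Quot.mk (orbitRelOf τ)

/-- The ordered configuration space `F(Y,2)` of two distinct points of `Y`. -/
abbrev Conf2 (Y : Type*) [TopologicalSpace Y] : Type _ := {p : Y × Y // p.1 ≠ p.2}

/-- The swap involution `τ₂` on `F(Y,2)`. -/
def confSwap {Y : Type*} [TopologicalSpace Y] : Conf2 Y → Conf2 Y :=
  fun p => ⟨(p.1.2, p.1.1), Ne.symm p.2⟩

/-- The unordered configuration space `D(Y,2) = F(Y,2)/τ₂`. -/
abbrev UConf2 (Y : Type*) [TopologicalSpace Y] : Type _ := InvolQuot (confSwap (Y := Y))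

/-- The quotient double covering `q^Y : F(Y,2) → D(Y,2)`. -/
def confQuotMk (Y : Type*) [TopologicalSpace Y] : Conf2 Y → UConf2 Y :=
  involQuotMk confSwap

/-- The Borsuk–Ulam property for the triple `((X,τ);Y)`. -/
def BorsukUlamProperty (X : Type*) [TopologicalSpace X] (τ : X → X)
    (Y : Type*) [TopologicalSpace Y] : Prop :=
  ∀ f : X → Y, Continuous f → ∃ x : X, f (τ x) = f x

/-- The `m`-sphere as the unit sphere of `ℝ^{m+1}`. -/
abbrev Sph (m : ℕ) : Type := Metric.sphere (0 : EuclideanSpace ℝ (Fin (m + 1))) 1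

/-- The antipodal involution on the sphere. -/
noncomputable def antipodal (m : ℕ) : Sph m → Sph m := fun x => -x

/-- The smallest dimension of a Euclidean space into which `Y` embeds. -/
noncomputable def embDim (Y : Type*) [TopologicalSpace Y] : ℕ∞ :=
  sInf {n : ℕ∞ | ∃ k : ℕ, n = (k : ℕ∞) ∧
    ∃ e : Y → EuclideanSpace ℝ (Fin k), Topology.IsEmbedding e}

/-- The `ℤ/2`-index of `(X,τ)`: the least `n` such that there is a continuous map
`X → Sⁿ` which is equivariant for `τ` and the antipodal involution. -/
noncomputable def z2Index {X : Type*} [TopologicalSpace X] (τ : X → X) : ℕ∞ :=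
  sInf {n : ℕ∞ | ∃ k : ℕ, n = (k : ℕ∞) ∧
    ∃ g : X → Sph k, Continuous g ∧ ∀ x, g (τ x) = antipodal k (g x)}

section CW

/-- A (classical) CW-complex structure on a Hausdorff space `X`: a family of cells
with characteristic maps from closed disks, the images of the open disks partitioning `X`,
each attaching map sending the boundary sphere into cells of lower dimension, together with
closure finiteness (C) and the weak topology (W). -/
structure CWStructure (X : Type u) [TopologicalSpace X] : Type (u + 1) where
  /-- index type of the `n`-cells -/
  cell : ℕ → Type u
  /-- characteristic map of each `n`-cell -/
  map : (n : ℕ) → cell n → EuclideanSpace ℝ (Fin n) → X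
  continuousOn : ∀ n i, ContinuousOn (map n i) (closedBall 0 1)
  injOn : ∀ n i, Set.InjOn (map n i) (ball 0 1)
  partition : ∀ x : X, ∃! p : Σ n, cell n, x ∈ map p.1 p.2 '' ball 0 1
  mapsTo_boundary : ∀ n i, Set.MapsTo (map n i) (sphere 0 1)
    (⋃ (m : ℕ) (_ : m < n) (j : cell m), map m j '' closedBall 0 1)
  closureFinite : ∀ n i, {p : Σ m, cell m |
    (map p.1 p.2 '' ball 0 1 ∩ map n i '' closedBall 0 1).Nonempty}.Finite
  weakTopology : ∀ A : Set X,
    (∀ n i, IsClosed (A ∩ map n i '' closedBall 0 1)) → IsClosed A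

namespace CWStructure

variable {X : Type u} [TopologicalSpace X] (S : CWStructure X)

/-- The `n`-skeleton of a CW structure. -/
def skeleton (n : ℕ) : Set X :=
  ⋃ (m : ℕ) (_ : m ≤ n) (j : S.cell m), S.map m j '' closedBall 0 1

/-- The CW structure has dimension at most `d`. -/
def DimLE (d : ℕ) : Prop := ∀ n, d < n → IsEmpty (S.cell n)

/-- The CW structure has dimension exactly `d`. -/
def DimEq (d : ℕ) : Prop := S.DimLE d ∧ Nonempty (S.cell d)

/-- A self-map is cellular if it maps each skeleton into itself. -/
def Cellular (f : X → X) : Prop := ∀ n, Set.MapsTo f (S.skeleton n) (S.skeleton n)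

end CWStructure

/-- The homotopical dimension of `X` is at most `d`: `X` is homotopy equivalent to a
CW complex of dimension at most `d`. -/
def HDimLE (X : Type u) [TopologicalSpace X] (d : ℕ) : Prop :=
  ∃ (Z : Type u) (_ : TopologicalSpace Z) (S : CWStructure Z),
    S.DimLE d ∧ Nonempty (ContinuousMap.HomotopyEquiv Z X)

end CW

/-!
If `f : X → Y` had no Borsuk–Ulam coincidence and `e : Y → ℝᵏ` is an embedding, then
`g x = e (f (τ x)) - e (f x)` is an odd map `X → ℝᵏ` without zeros. For each coordinate `i`, the
set `{x | 0 < gᵢ x}` is open and disjoint from its `τ`-translate, so the quotient map is a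
homeomorphism from it onto its image; these `k` images cover `X/τ`, since every orbit has a
point with some positive coordinate. Hence `secat q ≤ k`, contradicting `Emb(Y) < secat q`.
-/

open Set Topology

lemma Topology.IsEmbedding.isLocalSection_range {Z E B : Type*} [TopologicalSpace Z]
    [TopologicalSpace E] [TopologicalSpace B] {p : E → B} {j : Z → E} (hj : Continuous j)
    (hpj : IsEmbedding (p ∘ j)) : IsLocalSection p (range (p ∘ j)) :=
  ⟨j ∘ hpj.toHomeomorph.symm, hj.comp hpj.toHomeomorph.symm.continuous,
    fun u => congrArg Subtype.val (hpj.toHomeomorph.apply_symm_apply u)⟩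

section InvolQuot

variable {X : Type*} [TopologicalSpace X] {τ : X → X}

lemma involQuotMk_apply_self (x : X) : involQuotMk τ (τ x) = involQuotMk τ x :=
  (Quot.sound (r := orbitRelOf τ) rfl).symm

lemma involQuotMk_eq_iff (hτ : Function.Involutive τ) {x y : X} :
    involQuotMk τ x = involQuotMk τ y ↔ y = x ∨ y = τ x := by
  let R : X → X → Prop := fun x y => y = x ∨ y = τ x
  have hR : Equivalence R :=
    { refl := fun _ => Or.inl rfl
      symm := by rintro x y (rfl | rfl) <;> simp [R, hτ _]
      trans := by rintro x y z (rfl | rfl) (rfl | rfl) <;> simp [R, hτ _] }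
  refine ⟨fun h => hR.eqvGen_iff.mp <|
    Relation.EqvGen.mono (p := R) (fun _ _ => Or.inr) _ _ (Quot.eqvGen_exact h), ?_⟩
  rintro (rfl | rfl)
  exacts [rfl, (involQuotMk_apply_self x).symm]

lemma preimage_image_involQuotMk (hτ : Function.Involutive τ) (W : Set X) :
    involQuotMk τ ⁻¹' (involQuotMk τ '' W) = W ∪ τ ⁻¹' W := by
  ext x
  simp only [mem_preimage, mem_image, mem_union, involQuotMk_eq_iff hτ]
  constructor
  · rintro ⟨w, hw, rfl | rfl⟩
    · exact Or.inl hw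
    · exact Or.inr (by rwa [hτ])
  · rintro (hx | hx)
    · exact ⟨x, hx, Or.inl rfl⟩
    · exact ⟨τ x, hx, Or.inr (hτ x).symm⟩

lemma isOpenMap_involQuotMk (hc : Continuous τ) (hτ : Function.Involutive τ) :
    IsOpenMap (involQuotMk τ) := fun W hW =>
  isOpen_coinduced.mpr <| show IsOpen (involQuotMk τ ⁻¹' (involQuotMk τ '' W)) by
    rw [preimage_image_involQuotMk hτ]
    exact hW.union (hW.preimage hc)

lemma isLocalSection_involQuotMk_image (hc : Continuous τ) (hτ : Function.Involutive τ)
    {W : Set X} (hW : IsOpen W) (hdisj : Disjoint W (τ ⁻¹' W)) :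
    IsLocalSection (involQuotMk τ) (involQuotMk τ '' W) := by
  have hinj : (involQuotMk τ ∘ ((↑) : W → X)).Injective := by
    rintro ⟨a, ha⟩ ⟨b, hb⟩ hab
    rcases (involQuotMk_eq_iff hτ).mp hab with h | h
    · exact Subtype.ext h.symm
    · exact (disjoint_left.mp hdisj ha (show τ a ∈ W from h ▸ hb)).elim
  have hemb : IsEmbedding (involQuotMk τ ∘ ((↑) : W → X)) :=
    (IsOpenEmbedding.of_continuous_injective_isOpenMap
      (continuous_quot_mk.comp continuous_subtype_val) hinj
      ((isOpenMap_involQuotMk hc hτ).comp hW.isOpenMap_subtype_val)).isEmbedding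
  simpa [range_comp] using hemb.isLocalSection_range continuous_subtype_val

lemma isLocalSection_involQuotMk_image_pos (hc : Continuous τ) (hτ : Function.Involutive τ)
    {g : X → ℝ} (hg : Continuous g) (hodd : ∀ x, g (τ x) = -g x) :
    IsLocalSection (involQuotMk τ) (involQuotMk τ '' {x | 0 < g x}) :=
  isLocalSection_involQuotMk_image hc hτ (isOpen_lt continuous_const hg) <|
    disjoint_left.mpr fun x (hx : 0 < g x) (hτx : 0 < g (τ x)) => by linarith [hodd x]

lemma secat_involQuotMk_le_of_odd (hc : Continuous τ) (hτ : Function.Involutive τ) {k : ℕ}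
    {g : X → EuclideanSpace ℝ (Fin k)} (hg : Continuous g) (hodd : ∀ x, g (τ x) = -g x)
    (hne : ∀ x, g x ≠ 0) : secat (involQuotMk τ) ≤ k := by
  have hcoord : ∀ i, Continuous fun x => g x i := fun i => by fun_prop
  refine sInf_le ⟨k, rfl, fun i => involQuotMk τ '' {x | 0 < g x i},
    fun i => isOpenMap_involQuotMk hc hτ _ (isOpen_lt continuous_const (hcoord i)), ?_,
    fun i => isLocalSection_involQuotMk_image_pos hc hτ (hcoord i)
      fun x => by rw [hodd]; rfl⟩
  refine eq_univ_of_forall fun u => ?_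
  obtain ⟨x, rfl⟩ := Quot.exists_rep u
  obtain ⟨i, hi⟩ : ∃ i, g x i ≠ 0 := by
    by_contra! h
    exact hne x (PiLp.ext h)
  rcases hi.lt_or_gt with hneg | hpos
  · refine mem_iUnion.mpr ⟨i, τ x, ?_, involQuotMk_apply_self x⟩
    show 0 < g (τ x) i
    rw [hodd]
    exact neg_pos.mpr hneg
  · exact mem_iUnion.mpr ⟨i, x, hpos, rfl⟩

end InvolQuot

lemma borsukUlamProperty_of_injective_lt_secat {X Y : Type*} [TopologicalSpace X]
    [TopologicalSpace Y] {τ : X → X} (hc : Continuous τ) (hτ : Function.Involutive τ) {k : ℕ}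
    {e : Y → EuclideanSpace ℝ (Fin k)} (he : Continuous e) (hinj : e.Injective)
    (hk : (k : ℕ∞) < secat (involQuotMk τ)) : BorsukUlamProperty X τ Y := by
  intro f hf
  by_contra! hcoinc
  have hodd : ∀ x, e (f (τ (τ x))) - e (f (τ x)) = -(e (f (τ x)) - e (f x)) := fun x => by
    rw [hτ x, neg_sub]
  have hne : ∀ x, e (f (τ x)) - e (f x) ≠ 0 := fun x h =>
    hcoinc x (hinj (sub_eq_zero.mp h))
  exact (secat_involQuotMk_le_of_odd hc hτ (by fun_prop) hodd hne).not_gt hk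

theorem stmt_10_general {X Y : Type*} [TopologicalSpace X] [TopologicalSpace Y]
    (τ : X → X) (hτc : Continuous τ)
    (hτinv : Function.Involutive τ)
    (h : embDim Y < secat (involQuotMk τ)) :
    BorsukUlamProperty X τ Y := by
  obtain ⟨_, ⟨k, rfl, e, he⟩, hk⟩ := sInf_lt_iff.mp h
  exact borsukUlamProperty_of_injective_lt_secat hτc hτinv he.continuous he.injective hk

/-- if `Y` embeds in some Euclidean space and
`secat (q : X → X/τ) > Emb(Y)`, then `((X,τ);Y)` satisfies the BUP. -/
theorem stmt_10 {X Y : Type*} [TopologicalSpace X] [TopologicalSpace Y]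
    [T2Space X] [T2Space Y] (τ : X → X) (hτc : Continuous τ)
    (hτinv : Function.Involutive τ) (hτfree : ∀ x, τ x ≠ x)
    (hEmb : embDim Y < ⊤)
    (h : embDim Y < secat (involQuotMk τ)) :
    BorsukUlamProperty X τ Y :=
  stmt_10_general τ hτc hτinv h
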